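/- Let H be a Hermitian d×d complex matrix, let T > 0, and let γ = exp(−H/T)/tr(exp(−H/T)) be the Gibbs state of H at temperature T. Then for every unitary d×d matrix U one has tr(U γ U† H) ≥ tr(γ H). In other words, no unitary extracts energy from a thermal equilibrium state. -/

import Mathlib

/-!
Write `H = V diag(λ) V†` and `p = exp(-λ/T)`. In the eigenbasis of `H` one finds
`tr(U e^{-H/T} U† H) = ∑ᵢₖ |Mᵢₖ|² pₖ λᵢ` with `M = V† U V` unitary, so `Bᵢₖ = |Mᵢₖ|²` is doubly
stochastic, and `U = 1` gives `B = 1`. It remains to show `∑ₖ pₖ λₖ ≤ ∑ᵢₖ Bᵢₖ pₖ λᵢ`. Convexity of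
`exp` gives `pₖ - pᵢ ≤ pₖ (λᵢ - λₖ) / T`; weighted by `Bᵢₖ`, the left side sums to zero because
`B` has unit row and column sums, while the right side sums to the energy difference divided by `T`.
-/

open Matrix

theorem Real.exp_neg_mul_sub_exp_neg_mul_le (β a b : ℝ) :
    Real.exp (-β * a) - Real.exp (-β * b) ≤ β * Real.exp (-β * a) * (b - a) := by
  have h : Real.exp (-β * b) = Real.exp (-β * a) * Real.exp (β * (a - b)) := by
    rw [← Real.exp_add]; ring_nf
  have := mul_le_mul_of_nonneg_left (Real.add_one_le_exp (β * (a - b))) (Real.exp_pos (-β * a)).le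
  rw [h]
  linarith

namespace Matrix

variable {n : Type*} [Fintype n] [DecidableEq n]

theorem dotProduct_exp_neg_mul_le_dotProduct_mulVec {B : Matrix n n ℝ}
    (hB : B ∈ doublyStochastic ℝ n) {β : ℝ} (hβ : 0 < β) (l : n → ℝ) :
    l ⬝ᵥ (fun i => Real.exp (-β * l i)) ≤ l ⬝ᵥ (B *ᵥ fun i => Real.exp (-β * l i)) := by
  set p : n → ℝ := fun i => Real.exp (-β * l i)
  have hlhs : l ⬝ᵥ p = ∑ i, ∑ k, B i k * p k * l k := by
    rw [Finset.sum_comm]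
    refine Finset.sum_congr rfl fun k _ => ?_
    rw [← Finset.sum_mul, ← Finset.sum_mul, sum_col_of_mem_doublyStochastic hB, one_mul, mul_comm]
  have hrhs : l ⬝ᵥ (B *ᵥ p) = ∑ i, ∑ k, B i k * p k * l i := by
    simp only [dotProduct, mulVec, Finset.mul_sum]
    exact Finset.sum_congr rfl fun i _ => Finset.sum_congr rfl fun k _ => by ring
  have hbalance : ∑ i, ∑ k, B i k * (p k - p i) = 0 := by
    have hrow (i : n) : ∑ k, B i k * p i = p i := by
      rw [← Finset.sum_mul, sum_row_of_mem_doublyStochastic hB, one_mul]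
    simp only [mul_sub, Finset.sum_sub_distrib, hrow]
    exact sub_eq_zero.mpr (sum_mulVec_of_mem_doublyStochastic hB)
  have hconvex : ∑ i, ∑ k, B i k * (p k - p i) ≤ β * ∑ i, ∑ k, B i k * p k * (l i - l k) := by
    simp only [Finset.mul_sum]
    refine Finset.sum_le_sum fun i _ => Finset.sum_le_sum fun k _ => ?_
    have := mul_le_mul_of_nonneg_left (Real.exp_neg_mul_sub_exp_neg_mul_le β (l k) (l i))
      (nonneg_of_mem_doublyStochastic hB (i := i) (j := k))
    linarith
  have hgap : ∑ i, ∑ k, B i k * p k * (l i - l k) = l ⬝ᵥ (B *ᵥ p) - l ⬝ᵥ p := by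
    simp only [hlhs, hrhs, mul_sub, Finset.sum_sub_distrib]
  rw [hbalance, hgap] at hconvex
  exact sub_nonneg.mp (nonneg_of_mul_nonneg_right hconvex hβ)

theorem map_normSq_mem_doublyStochastic {U : Matrix n n ℂ} (hU : U ∈ unitaryGroup n ℂ) :
    U.map Complex.normSq ∈ doublyStochastic ℝ n := by
  refine mem_doublyStochastic_iff_sum.mpr ⟨fun _ _ => Complex.normSq_nonneg _, fun i => ?_,
    fun j => ?_⟩
  · have h := congr_fun₂ (mem_unitaryGroup_iff.mp hU) i i
    simp only [mul_apply, star_apply, Complex.star_def, Complex.mul_conj, one_apply_eq] at h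
    exact_mod_cast h
  · have h := congr_fun₂ (mem_unitaryGroup_iff'.mp hU) j j
    simp only [mul_apply, star_apply, Complex.star_def, mul_comm (starRingEnd ℂ _),
      Complex.mul_conj, one_apply_eq] at h
    exact_mod_cast h

theorem trace_mul_diagonal_mul_star_mul_diagonal (W : Matrix n n ℂ) (q l : n → ℝ) :
    trace (W * diagonal (fun k => (q k : ℂ)) * star W * diagonal (fun i => (l i : ℂ))) =
      ((l ⬝ᵥ (W.map Complex.normSq *ᵥ q) : ℝ) : ℂ) := by
  simp only [trace, diag, mul_apply, diagonal_apply, mul_ite, mul_zero, Finset.sum_ite_eq',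
    Finset.mem_univ, if_true, star_apply, dotProduct, mulVec, map_apply,
    Complex.ofReal_sum, Complex.ofReal_mul, Finset.sum_mul, Finset.mul_sum]
  refine Finset.sum_congr rfl fun i _ => Finset.sum_congr rfl fun k _ => ?_
  rw [Complex.normSq_eq_conj_mul_self]
  simp only [Complex.star_def]
  ring

theorem IsHermitian.trace_mul_cfc_mul_star_mul_self {A : Matrix n n ℂ} (hA : A.IsHermitian)
    (U : Matrix n n ℂ) (f : ℝ → ℝ) :
    trace (U * cfc f A * star U * A) =
      ((hA.eigenvalues ⬝ᵥ
        ((star (hA.eigenvectorUnitary : Matrix n n ℂ) * U * hA.eigenvectorUnitary).map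
          Complex.normSq *ᵥ (f ∘ hA.eigenvalues)) : ℝ) : ℂ) := by
  rw [← trace_mul_diagonal_mul_star_mul_diagonal]
  conv_lhs => enter [1, 2]; rw [hA.spectral_theorem]
  rw [hA.cfc_eq, IsHermitian.cfc]
  simp only [Unitary.conjStarAlgAut_apply, star_mul, star_star]
  rw [← Matrix.mul_assoc _ _ (star _), trace_mul_comm]
  simp only [Matrix.mul_assoc]
  rfl

theorem IsHermitian.trace_cfc {A : Matrix n n ℂ} (hA : A.IsHermitian) (f : ℝ → ℝ) :
    trace (cfc f A) = ((∑ i, f (hA.eigenvalues i) : ℝ) : ℂ) := by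
  rw [hA.cfc_eq, IsHermitian.cfc, Unitary.conjStarAlgAut_apply, trace_mul_cycle,
    Unitary.star_mul_self_of_mem hA.eigenvectorUnitary.2, Matrix.one_mul, trace_diagonal]
  simp

-- The norm only serves to invoke the C⋆-algebra API; `NormedSpace.exp` depends on the topology.
open scoped Matrix.Norms.L2Operator in
theorem IsHermitian.exp_smul_eq_cfc {A : Matrix n n ℂ} (hA : A.IsHermitian) (c : ℝ) :
    NormedSpace.exp (c • A) = cfc (fun x => Real.exp (c * x)) A := by
  rw [← CFC.real_exp_eq_normedSpace_exp (.smul (.all c) hA), ← cfc_comp_smul c Real.exp A]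
  rfl

end Matrix

theorem stmt_3 (d : ℕ) (H : Matrix (Fin d) (Fin d) ℂ) (hH : H.IsHermitian)
    (T : ℝ) (hT : 0 < T) :
    ∀ U ∈ Matrix.unitaryGroup (Fin d) ℂ,
      (Matrix.trace
        (((Matrix.trace (NormedSpace.exp ((-T⁻¹ : ℝ) • H)))⁻¹ •
            NormedSpace.exp ((-T⁻¹ : ℝ) • H)) * H)).re ≤
      (Matrix.trace
        (U * ((Matrix.trace (NormedSpace.exp ((-T⁻¹ : ℝ) • H)))⁻¹ •
            NormedSpace.exp ((-T⁻¹ : ℝ) • H)) * star U * H)).re := by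
  intro U hU
  set f := fun x => Real.exp (-T⁻¹ * x)
  set V : Matrix (Fin d) (Fin d) ℂ := (hH.eigenvectorUnitary : Matrix (Fin d) (Fin d) ℂ)
  have hV : V ∈ unitaryGroup (Fin d) ℂ := hH.eigenvectorUnitary.2
  rw [hH.exp_smul_eq_cfc, hH.trace_cfc]
  simp only [Matrix.smul_mul, Matrix.mul_smul, trace_smul, smul_eq_mul, ← Complex.ofReal_inv,
    Complex.re_ofReal_mul]
  refine mul_le_mul_of_nonneg_left ?_ (by positivity)
  have hLHS : trace (cfc f H * H) = trace (1 * cfc f H * star 1 * H) := by simp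
  have hId : (star V * 1 * V).map Complex.normSq = 1 := by
    rw [Matrix.mul_one, Unitary.star_mul_self_of_mem hV, Matrix.map_one _ (by simp) (by simp)]
  rw [hLHS, hH.trace_mul_cfc_mul_star_mul_self, hH.trace_mul_cfc_mul_star_mul_self,
    Complex.ofReal_re, Complex.ofReal_re, hId, one_mulVec]
  exact dotProduct_exp_neg_mul_le_dotProduct_mulVec
    (map_normSq_mem_doublyStochastic (mul_mem (mul_mem (Unitary.star_mem hV) hU) hV)) (inv_pos.2 hT) _
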